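/- arXiv:1803.06765 — 2 statements merged into one kernel-verified Lean document; each statement's English description precedes it below -/
import Mathlib

section
/- Let B ∈ ℝ^{M×N} have full row-rank (i.e., BBᵀ is invertible), and let B⁺ = Bᵀ(BBᵀ)⁻¹ denote its pseudo-inverse. Define d : ℝ^N → ℝ by d(u) = inf_{w ∈ null B} ‖u − w‖₁, the ℓ₁ distance from u to the null space of B. Then for every x ∈ ℝ^N, S_B(x) = inf_{v ∈ ℝ^M} ( d(B⁺ v) + (1/2)‖B x − v‖₂² ). -/
open Matrix

/-- The ℓ₁ norm on `ℝ^N`. -/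
noncomputable def norm1 {N : ℕ} (v : Fin N → ℝ) : ℝ := ∑ n, |v n|

/-- The squared Euclidean (ℓ₂) norm on `ℝ^M`. -/
def norm2sq {M : ℕ} (u : Fin M → ℝ) : ℝ := ∑ m, (u m) ^ 2

/-- The generalized Huber function
`S_B(x) = inf_v ( ‖v‖₁ + (1/2) ‖B(x - v)‖₂² )`. -/
noncomputable def genHuber {M N : ℕ} (B : Matrix (Fin M) (Fin N) ℝ) (x : Fin N → ℝ) : ℝ :=
  ⨅ v : Fin N → ℝ, (norm1 v + (1 / 2) * norm2sq (B.mulVec (x - v)))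

/-- The generalized MC (GMC) penalty `ψ_B(x) = ‖x‖₁ - S_B(x)`. -/
noncomputable def gmcPenalty {M N : ℕ} (B : Matrix (Fin M) (Fin N) ℝ) (x : Fin N → ℝ) : ℝ :=
  norm1 x - genHuber B x

/-- The ℓ₁ distance from `u` to the null space of `B`. -/
noncomputable def distL1ToNull {M N : ℕ} (B : Matrix (Fin M) (Fin N) ℝ) (u : Fin N → ℝ) : ℝ :=
  ⨅ w : {w : Fin N → ℝ // B.mulVec w = 0}, norm1 (u - w.val)

/-! If `B * P = 1`, every `u` is `P (B u) - w` with `w = P (B u) - u` in the null space of `B`,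
and conversely `B (P v - w) = v` for `w` in the null space. So minimising over `u` in the
generalized Huber function is the same as minimising first over `v = B u` and then over
`w ∈ null B`; the inner infimum is `d (P v)`. -/

section

variable {M N : ℕ}

lemma norm1_nonneg (v : Fin N → ℝ) : 0 ≤ norm1 v :=
  Finset.sum_nonneg fun _ _ => abs_nonneg _

lemma norm2sq_nonneg (u : Fin M → ℝ) : 0 ≤ norm2sq u :=
  Finset.sum_nonneg fun _ _ => sq_nonneg _

lemma distL1ToNull_nonneg (B : Matrix (Fin M) (Fin N) ℝ) (u : Fin N → ℝ) :
    0 ≤ distL1ToNull B u :=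
  Real.iInf_nonneg fun _ => norm1_nonneg _

lemma distL1ToNull_le (B : Matrix (Fin M) (Fin N) ℝ) (u : Fin N → ℝ) {w : Fin N → ℝ}
    (hw : B *ᵥ w = 0) : distL1ToNull B u ≤ norm1 (u - w) :=
  ciInf_le (⟨0, by rintro _ ⟨w, rfl⟩; exact norm1_nonneg _⟩ :
    BddBelow (Set.range fun w : {w // B *ᵥ w = 0} => norm1 (u - w.1))) ⟨w, hw⟩

lemma le_distL1ToNull {B : Matrix (Fin M) (Fin N) ℝ} {u : Fin N → ℝ} {c : ℝ}
    (h : ∀ w, B *ᵥ w = 0 → c ≤ norm1 (u - w)) : c ≤ distL1ToNull B u :=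
  have : Nonempty {w : Fin N → ℝ // B *ᵥ w = 0} := ⟨⟨0, B.mulVec_zero⟩⟩
  le_ciInf fun w => h w.1 w.2

lemma genHuber_le (B : Matrix (Fin M) (Fin N) ℝ) (x v : Fin N → ℝ) :
    genHuber B x ≤ norm1 v + 1 / 2 * norm2sq (B *ᵥ (x - v)) :=
  ciInf_le ⟨0, by
    rintro _ ⟨v, rfl⟩
    exact add_nonneg (norm1_nonneg _) (mul_nonneg (by norm_num) (norm2sq_nonneg _))⟩ v

theorem genHuber_eq_iInf_distL1ToNull_of_mul_eq_one {B : Matrix (Fin M) (Fin N) ℝ}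
    {P : Matrix (Fin N) (Fin M) ℝ} (hBP : B * P = 1) (x : Fin N → ℝ) :
    genHuber B x = ⨅ v, (distL1ToNull B (P *ᵥ v) + 1 / 2 * norm2sq (B *ᵥ x - v)) := by
  have hBPv (v : Fin M → ℝ) : B *ᵥ (P *ᵥ v) = v := by rw [mulVec_mulVec, hBP, one_mulVec]
  apply le_antisymm
  · refine le_ciInf fun v => ?_
    have h : genHuber B x - 1 / 2 * norm2sq (B *ᵥ x - v) ≤ distL1ToNull B (P *ᵥ v) :=
      le_distL1ToNull fun w hw => by
        have := genHuber_le B x (P *ᵥ v - w)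
        rw [mulVec_sub, mulVec_sub, hw, hBPv, sub_zero] at this
        linarith
    linarith
  · refine le_ciInf fun u => ?_
    have hdist : distL1ToNull B (P *ᵥ (B *ᵥ u)) ≤ norm1 u := by
      simpa only [sub_sub_cancel] using
        distL1ToNull_le B (P *ᵥ (B *ᵥ u)) (w := P *ᵥ (B *ᵥ u) - u)
          (by rw [mulVec_sub, hBPv, sub_self])
    have hbdd : BddBelow (Set.range fun v : Fin M → ℝ =>
        distL1ToNull B (P *ᵥ v) + 1 / 2 * norm2sq (B *ᵥ x - v)) := ⟨0, by
      rintro _ ⟨v, rfl⟩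
      exact add_nonneg (distL1ToNull_nonneg _ _) (mul_nonneg (by norm_num) (norm2sq_nonneg _))⟩
    calc (⨅ v, (distL1ToNull B (P *ᵥ v) + 1 / 2 * norm2sq (B *ᵥ x - v)))
        ≤ distL1ToNull B (P *ᵥ (B *ᵥ u)) + 1 / 2 * norm2sq (B *ᵥ x - B *ᵥ u) := ciInf_le hbdd _
      _ ≤ norm1 u + 1 / 2 * norm2sq (B *ᵥ (x - u)) := by rw [mulVec_sub]; linarith

end

/-- For full row-rank `B` with pseudo-inverse `B⁺ = Bᵀ(BBᵀ)⁻¹`, the generalized Huber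
function is the Moreau envelope of `d ∘ B⁺` evaluated at `Bx`, where `d` is the ℓ₁
distance to the null space of `B`. -/
theorem genHuber_eq_moreau_of_fullRowRank {M N : ℕ} (B : Matrix (Fin M) (Fin N) ℝ)
    (hB : IsUnit (B * Bᵀ).det) (x : Fin N → ℝ) :
    genHuber B x
      = ⨅ v : Fin M → ℝ,
          (distL1ToNull B ((Bᵀ * (B * Bᵀ)⁻¹).mulVec v) + (1 / 2) * norm2sq (B.mulVec x - v)) := by
  exact genHuber_eq_iInf_distL1ToNull_of_mul_eq_one
    (by rw [← Matrix.mul_assoc, mul_nonsing_inv _ hB]) x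
end

section
/- Let B ∈ ℝ^{M×N}. If BᵀB is the diagonal matrix diag(α₁², …, α_N²) for real numbers α₁, …, α_N, then the GMC penalty is separable: ψ_B(x) = ∑_{n=1}^N φ_{α_n}(x_n) for all x ∈ ℝ^N, where φ_b(t) = |t| − s_b(t) is the scaled MC penalty. In particular, if BᵀB = 0 then ψ_B(x) = ‖x‖₁. -/
open Matrix

/-- The Huber function: `s(x) = x²/2` for `|x| ≤ 1` and `s(x) = |x| - 1/2` for `|x| ≥ 1`. -/
noncomputable def huber (x : ℝ) : ℝ :=
  if |x| ≤ 1 then x ^ 2 / 2 else |x| - 1 / 2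

/-- The scaled Huber function: `s_b(x) = s(b² x)/b²` for `b ≠ 0`, and `s_0 = 0`. -/
noncomputable def scaledHuber (b x : ℝ) : ℝ :=
  if b = 0 then 0 else huber (b ^ 2 * x) / b ^ 2

/-- The scaled MC penalty: `φ_b(x) = |x| - s_b(x)`. -/
noncomputable def mcPenalty (b x : ℝ) : ℝ :=
  |x| - scaledHuber b x

lemma scalar_lb (a x t : ℝ) : scaledHuber a x ≤ |t| + a ^ 2 / 2 * (x - t) ^ 2 := by
  unfold scaledHuber huber
  rcases eq_or_ne a 0 with ha | ha
  · simp [ha]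
  · rw [if_neg ha]
    have ha2 : (0:ℝ) < a ^ 2 := by positivity
    have habs : |a ^ 2 * x| = a ^ 2 * |x| := by
      rw [abs_mul, abs_of_pos ha2]
    by_cases h : |a ^ 2 * x| ≤ 1
    · rw [if_pos h]
      have hax : a ^ 2 * |x| ≤ 1 := habs ▸ h
      have key : a ^ 2 * x ^ 2 / 2 ≤ |t| + a ^ 2 / 2 * (x - t) ^ 2 := by
        nlinarith [mul_le_mul_of_nonneg_left (le_abs_self (t * x)) ha2.le,
          abs_mul t x, mul_le_mul_of_nonneg_left hax (abs_nonneg t),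
          sq_nonneg t, abs_nonneg t]
      have : (a ^ 2 * x) ^ 2 / 2 / a ^ 2 = a ^ 2 * x ^ 2 / 2 := by
        field_simp
      linarith [key, this.le]
    · rw [if_neg h]
      rw [habs] at h
      push_neg at h
      rw [habs, div_le_iff₀ ha2]
      have h3 : |x| ≤ |t| + |x - t| := by
        calc |x| = |t + (x - t)| := by ring_nf
        _ ≤ |t| + |x - t| := abs_add_le _ _
      have h4 : a ^ 2 * |x - t| ≤ a ^ 4 * (x - t) ^ 2 / 2 + 1 / 2 := by
        have hs : (a ^ 2 * |x - t|) ^ 2 = a ^ 4 * (x - t) ^ 2 := by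
          rw [mul_pow, sq_abs]; ring
        nlinarith [sq_nonneg (a ^ 2 * |x - t| - 1), hs]
      have h5 : a ^ 2 * |x| ≤ a ^ 2 * |t| + a ^ 2 * |x - t| := by
        nlinarith [mul_le_mul_of_nonneg_left h3 ha2.le]
      nlinarith [h4, h5]

lemma scalar_min (a x : ℝ) : ∃ t : ℝ, |t| + a ^ 2 / 2 * (x - t) ^ 2 = scaledHuber a x := by
  unfold scaledHuber huber
  rcases eq_or_ne a 0 with ha | ha
  · exact ⟨0, by simp [ha]⟩
  · have ha2 : (0:ℝ) < a ^ 2 := by positivity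
    rw [if_neg ha]
    have habs : |a ^ 2 * x| = a ^ 2 * |x| := by rw [abs_mul, abs_of_pos ha2]
    by_cases h : |a ^ 2 * x| ≤ 1
    · refine ⟨0, ?_⟩
      rw [if_pos h]
      field_simp
      ring
    · rw [if_neg h, habs]
      rw [habs] at h; push_neg at h
      rcases le_or_gt 0 x with hx | hx
      · refine ⟨x - 1 / a ^ 2, ?_⟩
        have hxpos : 1 / a ^ 2 < x := by
          rw [div_lt_iff₀ ha2]; rw [abs_of_nonneg hx] at h; nlinarith
        rw [abs_of_nonneg hx, abs_of_pos (by linarith [hxpos, (by positivity : (0:ℝ) < 1 / a^2)] : (0:ℝ) < x - 1 / a ^ 2)]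
        field_simp
        ring
      · refine ⟨x + 1 / a ^ 2, ?_⟩
        have hxneg : x + 1 / a ^ 2 < 0 := by
          rw [abs_of_neg hx] at h
          have : 1 / a ^ 2 < -x := by rw [div_lt_iff₀ ha2]; nlinarith
          linarith
        rw [abs_of_neg hx, abs_of_neg hxneg]
        field_simp
        ring

lemma quad_eq {M N : ℕ} (B : Matrix (Fin M) (Fin N) ℝ) (α : Fin N → ℝ)
    (hBB : Bᵀ * B = Matrix.diagonal (fun n => (α n) ^ 2)) (w : Fin N → ℝ) :
    norm2sq (B.mulVec w) = ∑ n, (α n) ^ 2 * (w n) ^ 2 := by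
  have h1 : norm2sq (B.mulVec w) = (B.mulVec w) ⬝ᵥ (B.mulVec w) := by
    simp [norm2sq, dotProduct, sq]
  rw [h1]
  have h2 : (B.mulVec w) ⬝ᵥ (B.mulVec w) = ((Bᵀ * B).mulVec w) ⬝ᵥ w := by
    rw [Matrix.dotProduct_mulVec, ← Matrix.mulVec_transpose, ← Matrix.mulVec_mulVec]
  rw [h2, hBB]
  simp [dotProduct, Matrix.mulVec_diagonal, sq]
  exact Finset.sum_congr rfl fun n _ => by ring

lemma genHuber_eq_sum {M N : ℕ} (B : Matrix (Fin M) (Fin N) ℝ) (α : Fin N → ℝ)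
    (hBB : Bᵀ * B = Matrix.diagonal (fun n => (α n) ^ 2)) (x : Fin N → ℝ) :
    genHuber B x = ∑ n, scaledHuber (α n) (x n) := by
  have Feq : ∀ v : Fin N → ℝ, norm1 v + (1 / 2) * norm2sq (B.mulVec (x - v)) =
      ∑ n, (|v n| + (α n) ^ 2 / 2 * (x n - v n) ^ 2) := by
    intro v
    rw [quad_eq B α hBB, norm1, Finset.mul_sum, ← Finset.sum_add_distrib]
    exact Finset.sum_congr rfl fun n _ => by simp [Pi.sub_apply]; ring
  have hbdd : BddBelow (Set.range fun v : Fin N → ℝ =>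
      norm1 v + (1 / 2) * norm2sq (B.mulVec (x - v))) := by
    refine ⟨0, ?_⟩
    rintro y ⟨v, rfl⟩
    have h1 : 0 ≤ norm1 v := Finset.sum_nonneg fun n _ => abs_nonneg _
    have h2 : 0 ≤ norm2sq (B.mulVec (x - v)) := Finset.sum_nonneg fun m _ => sq_nonneg _
    dsimp only
    linarith
  apply le_antisymm
  · choose t ht using fun n => scalar_min (α n) (x n)
    have h := ciInf_le hbdd t
    rw [Feq t] at h
    calc genHuber B x ≤ ∑ n, (|t n| + (α n) ^ 2 / 2 * (x n - t n) ^ 2) := h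
    _ = ∑ n, scaledHuber (α n) (x n) := Finset.sum_congr rfl fun n _ => ht n
  · refine le_ciInf fun v => ?_
    rw [Feq v]
    exact Finset.sum_le_sum fun n _ => scalar_lb _ _ _

/-- If `BᵀB` is diagonal, the GMC penalty is separable: a sum of scalar scaled MC
penalties.  In particular, if `CᵀC = 0` for a matrix `C`, then `ψ_C(x) = ‖x‖₁`. -/
theorem gmcPenalty_separable_of_diagonal {M N : ℕ} (B : Matrix (Fin M) (Fin N) ℝ)
    (α : Fin N → ℝ) (hBB : Bᵀ * B = Matrix.diagonal (fun n => (α n) ^ 2)) :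
    (∀ x : Fin N → ℝ, gmcPenalty B x = ∑ n, mcPenalty (α n) (x n)) ∧
    (∀ (M' : ℕ) (C : Matrix (Fin M') (Fin N) ℝ), Cᵀ * C = 0 →
      ∀ x : Fin N → ℝ, gmcPenalty C x = norm1 x) := by
  constructor
  · intro x
    rw [gmcPenalty, genHuber_eq_sum B α hBB x]
    unfold mcPenalty norm1
    rw [← Finset.sum_sub_distrib]
  · intro M' C hC x
    have hdiag : Cᵀ * C = Matrix.diagonal (fun n : Fin N => ((0:ℝ)) ^ 2) := by
      rw [hC]; simp
    rw [gmcPenalty, genHuber_eq_sum C (fun _ => 0) hdiag x]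
    simp [scaledHuber]
end
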